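/- For every branch-and-bound tree T proving integer-freeness of a product of polytopes P × Q, there exists a branch-and-bound tree for P conforming to T, or a branch-and-bound tree for Q conforming to T. -/
import Mathlib


/-- A branch-and-bound tree with general disjunctions on `n` variables. -/
inductive BBTree (n : ℕ) where
  | leaf : BBTree n
  | node (α : Fin n → ℤ) (δ : ℤ) (l r : BBTree n) : BBTree n

/-- Validity of a branch-and-bound tree for a set `P`. -/
def BBValid {n : ℕ} (P : Set (Fin n → ℝ)) : BBTree n → Prop
  | .leaf => P = ∅
  | .node α δ l r =>
      BBValid (P ∩ {x | ∑ i, (α i : ℝ) * x i ≤ (δ : ℝ)}) l ∧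
      BBValid (P ∩ {x | (δ : ℝ) + 1 ≤ ∑ i, (α i : ℝ) * x i}) r

/-- `T'` (a tree on the `x`-variables) conforms to `T` (a tree on `(x,y)`-variables):
same underlying ordered binary tree, and at each node the coefficient vector of
`T'` is the `x`-part of the coefficient vector of `T` (with arbitrary new rhs). -/
def ConformsL {n₁ n₂ : ℕ} : BBTree n₁ → BBTree (n₁ + n₂) → Prop
  | .leaf, .leaf => True
  | .node α' _ l' r', .node α _ l r =>
      (∀ i, α' i = α (Fin.castAdd n₂ i)) ∧ ConformsL l' l ∧ ConformsL r' r
  | _, _ => False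

/-- Conforming on the `y`-variables. -/
def ConformsR {n₁ n₂ : ℕ} : BBTree n₂ → BBTree (n₁ + n₂) → Prop
  | .leaf, .leaf => True
  | .node β' _ l' r', .node α _ l r =>
      (∀ j, β' j = α (Fin.natAdd n₁ j)) ∧ ConformsR l' l ∧ ConformsR r' r
  | _, _ => False

/-- The Cartesian product of `P ⊆ ℝ^{n₁}` and `Q ⊆ ℝ^{n₂}` inside `ℝ^{n₁+n₂}`. -/
def prodSet {n₁ n₂ : ℕ} (P : Set (Fin n₁ → ℝ)) (Q : Set (Fin n₂ → ℝ)) :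
    Set (Fin (n₁ + n₂) → ℝ) :=
  {w | (fun i => w (Fin.castAdd n₂ i)) ∈ P ∧ (fun j => w (Fin.natAdd n₁ j)) ∈ Q}

/-- A polytope: a bounded set described by finitely many linear inequalities. -/
def IsPolytope {n : ℕ} (P : Set (Fin n → ℝ)) : Prop :=
  Bornology.IsBounded P ∧
    ∃ (m : ℕ) (A : Fin m → Fin n → ℝ) (b : Fin m → ℝ),
      P = {x | ∀ i, ∑ j, A i j * x j ≤ b i}


section Aux

open Finset

/-- `BBValid` is antitone in the set. -/
lemma BBValid_anti {n : ℕ} : ∀ (T : BBTree n) {P P' : Set (Fin n → ℝ)},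
    P ⊆ P' → BBValid P' T → BBValid P T
  | .leaf, P, P', h, hv => by
      simp only [BBValid] at *
      exact Set.subset_empty_iff.mp (hv ▸ h)
  | .node α δ l r, P, P', h, hv =>
      ⟨BBValid_anti l (Set.inter_subset_inter_left _ h) hv.1,
       BBValid_anti r (Set.inter_subset_inter_left _ h) hv.2⟩

lemma BBValid_empty {n : ℕ} : ∀ T : BBTree n, BBValid (∅ : Set (Fin n → ℝ)) T
  | .leaf => rfl
  | .node α δ l r => by
      refine ⟨?_, ?_⟩ <;> rw [Set.empty_inter] <;> exact BBValid_empty _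

lemma BBValid_of_empty {n : ℕ} {P : Set (Fin n → ℝ)} (h : P = ∅) (T : BBTree n) :
    BBValid P T :=
  h ▸ BBValid_empty T

/-- The left projection of a tree. -/
def projL {n₁ n₂ : ℕ} : BBTree (n₁ + n₂) → BBTree n₁
  | .leaf => .leaf
  | .node α _ l r => .node (fun i => α (Fin.castAdd n₂ i)) 0 (projL l) (projL r)

def projR {n₁ n₂ : ℕ} : BBTree (n₁ + n₂) → BBTree n₂
  | .leaf => .leaf
  | .node α _ l r => .node (fun j => α (Fin.natAdd n₁ j)) 0 (projR l) (projR r)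

lemma conformsL_projL {n₁ n₂ : ℕ} : ∀ T : BBTree (n₁ + n₂), ConformsL (projL T) T
  | .leaf => trivial
  | .node α δ l r => ⟨fun _ => rfl, conformsL_projL l, conformsL_projL r⟩

lemma conformsR_projR {n₁ n₂ : ℕ} : ∀ T : BBTree (n₁ + n₂), ConformsR (projR T) T
  | .leaf => trivial
  | .node α δ l r => ⟨fun _ => rfl, conformsR_projR l, conformsR_projR r⟩

/-- A bounded set avoids sufficiently low halfspaces. -/
lemma exists_bound {n : ℕ} (c : Fin n → ℤ) {S : Set (Fin n → ℝ)}
    (hS : Bornology.IsBounded S) :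
    ∃ M : ℝ, ∀ x ∈ S, |∑ i, (c i : ℝ) * x i| ≤ M := by
  obtain ⟨C, hC⟩ := isBounded_iff_forall_norm_le.mp hS
  refine ⟨(∑ i, |(c i : ℝ)|) * C, fun x hx => ?_⟩
  calc |∑ i, (c i : ℝ) * x i| ≤ ∑ i, |(c i : ℝ) * x i| := Finset.abs_sum_le_sum_abs _ _
    _ ≤ ∑ i, |(c i : ℝ)| * C := by
        refine Finset.sum_le_sum fun i _ => ?_
        rw [abs_mul]
        refine mul_le_mul_of_nonneg_left ?_ (abs_nonneg _)
        calc |x i| = ‖x i‖ := (Real.norm_eq_abs _).symm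
          _ ≤ ‖x‖ := norm_le_pi_norm x i
          _ ≤ C := hC x hx
    _ = (∑ i, |(c i : ℝ)|) * C := (Finset.sum_mul _ _ _).symm

lemma exists_le_empty {n : ℕ} (c : Fin n → ℤ) {S : Set (Fin n → ℝ)}
    (hS : Bornology.IsBounded S) :
    ∃ s : ℤ, S ∩ {x | ∑ i, (c i : ℝ) * x i ≤ (s : ℝ)} = ∅ := by
  obtain ⟨M, hM⟩ := exists_bound c hS
  refine ⟨⌊-M⌋ - 1, Set.eq_empty_iff_forall_notMem.mpr fun x ⟨hx, hx2⟩ => ?_⟩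
  have h1 : -M ≤ ∑ i, (c i : ℝ) * x i := neg_le_of_abs_le (hM x hx)
  have h2 : ((⌊-M⌋ - 1 : ℤ) : ℝ) < -M := by
    push_cast
    have := Int.floor_le (-M)
    linarith
  simp only [Set.mem_setOf_eq] at hx2
  linarith

lemma exists_ge_empty {n : ℕ} (c : Fin n → ℤ) {S : Set (Fin n → ℝ)}
    (hS : Bornology.IsBounded S) :
    ∃ t : ℤ, S ∩ {x | (t : ℝ) ≤ ∑ i, (c i : ℝ) * x i} = ∅ := by
  obtain ⟨M, hM⟩ := exists_bound c hS
  refine ⟨⌈M⌉ + 1, Set.eq_empty_iff_forall_notMem.mpr fun x ⟨hx, hx2⟩ => ?_⟩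
  have h1 : ∑ i, (c i : ℝ) * x i ≤ M := le_of_abs_le (hM x hx)
  have h2 : M < ((⌈M⌉ + 1 : ℤ) : ℝ) := by
    push_cast
    have := Int.le_ceil M
    linarith
  simp only [Set.mem_setOf_eq] at hx2
  linarith

/-- The key integer combinatorics. -/
lemma int_combinatorics (LP LQ RP RQ : ℤ → Prop)
    (total_l : ∀ s, LP s ∨ LQ s) (total_r : ∀ t, RP t ∨ RQ t)
    (s₁ : ℤ) (hs₁ : LP s₁) (t₂ : ℤ) (ht₂ : RP t₂)
    (H1 : ∀ s t, LP s → RP t → ¬(t ≤ s + 1))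
    (H2 : ∀ s t, LQ s → RQ t → ¬(s ≤ t)) : False := by
  have step : ∀ t : ℤ, RP t → RP (t - 1) := by
    intro t ht
    have hLP : ¬LP (t - 1) := fun h => H1 _ _ h ht (by omega)
    have hLQ : LQ (t - 1) := (total_l _).resolve_left hLP
    have hRQ : ¬RQ (t - 1) := fun h => H2 _ _ hLQ h le_rfl
    exact (total_r _).resolve_right hRQ
  have down : ∀ n : ℕ, RP (t₂ - n) := by
    intro n
    induction n with
    | zero => simpa using ht₂
    | succ k ih =>
        have := step _ ih
        have he : t₂ - (k + 1 : ℕ) = t₂ - k - 1 := by push_cast; ring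
        rw [he]
        exact this
  rcases le_or_gt t₂ (s₁ + 1) with h | h
  · exact H1 _ _ hs₁ ht₂ h
  · have := down (t₂ - s₁ - 1).toNat
    have he : t₂ - ((t₂ - s₁ - 1).toNat : ℤ) = s₁ + 1 := by omega
    rw [he] at this
    exact H1 _ _ hs₁ this le_rfl

/-- Main lemma, with just boundedness. -/
theorem key_interpolation {n₁ n₂ : ℕ} :
    ∀ (T : BBTree (n₁ + n₂)) (P : Set (Fin n₁ → ℝ)) (Q : Set (Fin n₂ → ℝ)),
    Bornology.IsBounded P → Bornology.IsBounded Q →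
    BBValid (prodSet P Q) T →
    (∃ T' : BBTree n₁, ConformsL (n₂ := n₂) T' T ∧ BBValid P T') ∨
    (∃ T'' : BBTree n₂, ConformsR (n₁ := n₁) T'' T ∧ BBValid Q T'') := by
  intro T
  induction T with
  | leaf =>
      intro P Q hPb hQb hT
      simp only [BBValid] at hT
      by_cases hP : P = ∅
      · exact Or.inl ⟨.leaf, trivial, hP⟩
      · refine Or.inr ⟨.leaf, trivial, ?_⟩
        show Q = ∅
        obtain ⟨x, hx⟩ := Set.nonempty_iff_ne_empty.mpr hP
        rw [Set.eq_empty_iff_forall_notMem]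
        intro y hy
        have : Fin.append x y ∈ prodSet P Q := by
          constructor
          · simpa only [Fin.append_left] using hx
          · simpa only [Fin.append_right] using hy
        rw [hT] at this
        exact this
  | node α δ l r ihl ihr =>
      intro P Q hPb hQb hT
      obtain ⟨hTl, hTr⟩ := hT
      set a : Fin n₁ → ℤ := fun i => α (Fin.castAdd n₂ i) with ha
      set b : Fin n₂ → ℤ := fun j => α (Fin.natAdd n₁ j) with hb
      have sum_split : ∀ w : Fin (n₁ + n₂) → ℝ,
          ∑ i, (α i : ℝ) * w i =
            (∑ i, (a i : ℝ) * w (Fin.castAdd n₂ i)) +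
            (∑ j, (b j : ℝ) * w (Fin.natAdd n₁ j)) := by
        intro w
        rw [Fin.sum_univ_add (f := fun i => (α i : ℝ) * w i)]
      -- predicates
      set LP : ℤ → Prop := fun s => ∃ T', ConformsL T' l ∧
        BBValid (P ∩ {x | ∑ i, (a i : ℝ) * x i ≤ (s : ℝ)}) T' with hLP
      set LQ : ℤ → Prop := fun s => ∃ T'', ConformsR T'' l ∧
        BBValid (Q ∩ {y | ∑ j, (b j : ℝ) * y j ≤ (δ : ℝ) - (s : ℝ)}) T'' with hLQ
      set RP : ℤ → Prop := fun t => ∃ T', ConformsL T' r ∧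
        BBValid (P ∩ {x | (t : ℝ) ≤ ∑ i, (a i : ℝ) * x i}) T' with hRP
      set RQ : ℤ → Prop := fun t => ∃ T'', ConformsR T'' r ∧
        BBValid (Q ∩ {y | (δ : ℝ) + 1 - (t : ℝ) ≤ ∑ j, (b j : ℝ) * y j}) T'' with hRQ
      have total_l : ∀ s : ℤ, LP s ∨ LQ s := by
        intro s
        have hsub : prodSet (P ∩ {x | ∑ i, (a i : ℝ) * x i ≤ (s : ℝ)})
            (Q ∩ {y | ∑ j, (b j : ℝ) * y j ≤ (δ : ℝ) - (s : ℝ)}) ⊆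
            prodSet P Q ∩ {w | ∑ i, (α i : ℝ) * w i ≤ (δ : ℝ)} := by
          rintro w ⟨⟨hwP, hw1⟩, ⟨hwQ, hw2⟩⟩
          refine ⟨⟨hwP, hwQ⟩, ?_⟩
          have := sum_split w
          simp only [Set.mem_setOf_eq] at hw1 hw2 ⊢
          linarith
        exact ihl _ _ (hPb.subset (Set.inter_subset_left)) (hQb.subset (Set.inter_subset_left))
          (BBValid_anti l hsub hTl)
      have total_r : ∀ t : ℤ, RP t ∨ RQ t := by
        intro t
        have hsub : prodSet (P ∩ {x | (t : ℝ) ≤ ∑ i, (a i : ℝ) * x i})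
            (Q ∩ {y | (δ : ℝ) + 1 - (t : ℝ) ≤ ∑ j, (b j : ℝ) * y j}) ⊆
            prodSet P Q ∩ {w | (δ : ℝ) + 1 ≤ ∑ i, (α i : ℝ) * w i} := by
          rintro w ⟨⟨hwP, hw1⟩, ⟨hwQ, hw2⟩⟩
          refine ⟨⟨hwP, hwQ⟩, ?_⟩
          have := sum_split w
          simp only [Set.mem_setOf_eq] at hw1 hw2 ⊢
          linarith
        exact ihr _ _ (hPb.subset (Set.inter_subset_left)) (hQb.subset (Set.inter_subset_left))
          (BBValid_anti r hsub hTr)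
      have exL : ∃ s, LP s := by
        obtain ⟨s, hs⟩ := exists_le_empty a hPb
        exact ⟨s, projL l, conformsL_projL l, BBValid_of_empty hs _⟩
      have exR : ∃ t, RP t := by
        obtain ⟨t, ht⟩ := exists_ge_empty a hPb
        exact ⟨t, projL r, conformsL_projL r, BBValid_of_empty ht _⟩
      -- glue
      by_cases hgoodP : ∃ s t : ℤ, LP s ∧ RP t ∧ t ≤ s + 1
      · obtain ⟨s, t, ⟨Tl', hTl'c, hTl'v⟩, ⟨Tr', hTr'c, hTr'v⟩, hst⟩ := hgoodP
        refine Or.inl ⟨.node a s Tl' Tr', ⟨fun _ => rfl, hTl'c, hTr'c⟩, hTl'v, ?_⟩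
        refine BBValid_anti Tr' ?_ hTr'v
        refine Set.inter_subset_inter_right _ ?_
        intro x hx
        simp only [Set.mem_setOf_eq] at hx ⊢
        have : (t : ℝ) ≤ (s : ℝ) + 1 := by exact_mod_cast hst
        linarith
      by_cases hgoodQ : ∃ s t : ℤ, LQ s ∧ RQ t ∧ s ≤ t
      · obtain ⟨s, t, ⟨Tl'', hTl''c, hTl''v⟩, ⟨Tr'', hTr''c, hTr''v⟩, hst⟩ := hgoodQ
        refine Or.inr ⟨.node b (δ - s) Tl'' Tr'', ⟨fun _ => rfl, hTl''c, hTr''c⟩, ?_, ?_⟩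
        · refine BBValid_anti Tl'' ?_ hTl''v
          refine Set.inter_subset_inter_right _ ?_
          intro y hy
          simp only [Set.mem_setOf_eq] at hy ⊢
          push_cast at hy ⊢
          linarith
        · refine BBValid_anti Tr'' ?_ hTr''v
          refine Set.inter_subset_inter_right _ ?_
          intro y hy
          simp only [Set.mem_setOf_eq] at hy ⊢
          have : (s : ℝ) ≤ (t : ℝ) := by exact_mod_cast hst
          push_cast at hy ⊢
          linarith
      exfalso
      obtain ⟨s₁, hs₁⟩ := exL
      obtain ⟨t₂, ht₂⟩ := exR
      exact int_combinatorics LP LQ RP RQ total_l total_r s₁ hs₁ t₂ ht₂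
        (fun s t hs ht hle => hgoodP ⟨s, t, hs, ht, hle⟩)
        (fun s t hs ht hle => hgoodQ ⟨s, t, hs, ht, hle⟩)

end Aux

/-- Structural Interpolation Lemma: every branch-and-bound tree for a product of
polytopes `P × Q` has a conforming branch-and-bound tree for `P` or for `Q`. -/
theorem structural_interpolation (n₁ n₂ : ℕ)
    (P : Set (Fin n₁ → ℝ)) (Q : Set (Fin n₂ → ℝ))
    (hP : IsPolytope P) (hQ : IsPolytope Q)
    (T : BBTree (n₁ + n₂)) (hT : BBValid (prodSet P Q) T) :
    (∃ T' : BBTree n₁, ConformsL (n₂ := n₂) T' T ∧ BBValid P T') ∨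
    (∃ T'' : BBTree n₂, ConformsR (n₁ := n₁) T'' T ∧ BBValid Q T'') := by
  exact key_interpolation T P Q hP.1 hQ.1 hT
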